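/- arXiv:2602.16078 — 2 statements merged into one kernel-verified Lean document; each statement's English description precedes it below -/
import Mathlib

section
/- (Lorenz dominance in Proposition 4.) Fix reals γ > 0, β > 0, α ∈ (0,1), an integer n ≥ 2, and strictly increasing manager skills 0 < s_1 < s_2 < ⋯ < s_n ≤ 1. Define wages w_i(K) = (1 + γ·K·s_i^β)^α for K ≥ 0. Then for every k with 1 ≤ k < n, the bottom-k wage share F_k(K) = (Σ_{i=1}^k w_i(K)) / (Σ_{i=1}^n w_i(K)) is strictly decreasing in K on [0,∞); that is, the Lorenz curve at a higher level of agent capital lies strictly below the Lorenz curve at a lower level at every interior point. -/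
/-- Lorenz dominance in Proposition 4: with wages
`wᵢ(K) = (1 + γ·K·sᵢ^β)^α` for strictly increasing skills
`0 < s 0 < ⋯ < s (n−1) ≤ 1`, every bottom-`k` wage share (for `1 ≤ k < n`)
is strictly decreasing in `K` on `[0, ∞)`. -/
theorem stmt_10 (γ β α : ℝ) (hγ : 0 < γ) (hβ : 0 < β) (hα0 : 0 < α)
    (hα1 : α < 1) (n : ℕ) (hn : 2 ≤ n) (s : ℕ → ℝ)
    (hs0 : ∀ i < n, 0 < s i) (hs1 : ∀ i < n, s i ≤ 1)
    (hmono : ∀ i j, i < j → j < n → s i < s j) :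
    ∀ k : ℕ, 1 ≤ k → k < n →
      StrictAntiOn
        (fun K : ℝ =>
          (∑ i ∈ Finset.range k, (1 + γ * K * s i ^ β) ^ α) /
            (∑ i ∈ Finset.range n, (1 + γ * K * s i ^ β) ^ α))
        (Set.Ici 0) := by
  intro k hk1 hkn K1 hK1 K2 hK2 hK12
  simp only [Set.mem_Ici] at hK1 hK2
  -- positivity of bases
  have hpos : ∀ i, i < n → ∀ K : ℝ, 0 ≤ K → 0 < 1 + γ * K * s i ^ β := by
    intro i hi K hK
    have hsp : 0 < s i ^ β := Real.rpow_pos_of_pos (hs0 i hi) β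
    nlinarith [mul_nonneg (mul_nonneg hγ.le hK) hsp.le]
  have hwpos : ∀ i, i < n → ∀ K : ℝ, 0 ≤ K → 0 < (1 + γ * K * s i ^ β) ^ α := by
    intro i hi K hK
    exact Real.rpow_pos_of_pos (hpos i hi K hK) α
  -- termwise key inequality
  have key : ∀ i j, i < k → k ≤ j → j < n →
      (1 + γ * K2 * s i ^ β) ^ α * (1 + γ * K1 * s j ^ β) ^ α <
        (1 + γ * K1 * s i ^ β) ^ α * (1 + γ * K2 * s j ^ β) ^ α := by
    intro i j hik hkj hjn
    have hij : i < j := lt_of_lt_of_le hik hkj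
    have hin : i < n := lt_trans hij hjn
    have hsij : s i < s j := hmono i j hij hjn
    have hb : s i ^ β < s j ^ β := Real.rpow_lt_rpow (hs0 i hin).le hsij hβ
    rw [← Real.mul_rpow (hpos i hin K2 hK2).le (hpos j hjn K1 hK1).le,
        ← Real.mul_rpow (hpos i hin K1 hK1).le (hpos j hjn K2 hK2).le]
    apply Real.rpow_lt_rpow
      (mul_nonneg (hpos i hin K2 hK2).le (hpos j hjn K1 hK1).le) _ hα0
    nlinarith [mul_pos (mul_pos hγ (sub_pos.mpr hK12)) (sub_pos.mpr hb)]
  -- cross-sum inequality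
  have hne1 : (Finset.range k).Nonempty := by
    rw [Finset.nonempty_range_iff]; omega
  have hne2 : (Finset.Ico k n).Nonempty := by
    rw [Finset.nonempty_Ico]; omega
  have hsum :
      (∑ i ∈ Finset.range k, (1 + γ * K2 * s i ^ β) ^ α) *
        (∑ j ∈ Finset.Ico k n, (1 + γ * K1 * s j ^ β) ^ α) <
      (∑ i ∈ Finset.range k, (1 + γ * K1 * s i ^ β) ^ α) *
        (∑ j ∈ Finset.Ico k n, (1 + γ * K2 * s j ^ β) ^ α) := by
    rw [Finset.sum_mul_sum, Finset.sum_mul_sum]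
    apply Finset.sum_lt_sum_of_nonempty hne1
    intro i hi
    apply Finset.sum_lt_sum_of_nonempty hne2
    intro j hj
    rw [Finset.mem_range] at hi
    rw [Finset.mem_Ico] at hj
    exact key i j hi hj.1 hj.2
  -- split the total sums
  have hsplit : ∀ K : ℝ, (∑ i ∈ Finset.range n, (1 + γ * K * s i ^ β) ^ α) =
      (∑ i ∈ Finset.range k, (1 + γ * K * s i ^ β) ^ α) +
        (∑ j ∈ Finset.Ico k n, (1 + γ * K * s j ^ β) ^ α) := by
    intro K
    rw [Finset.range_eq_Ico, ← Finset.sum_Ico_consecutive _ (Nat.zero_le k) hkn.le,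
      ← Finset.range_eq_Ico]
  -- positivity of partial sums
  have hA1 : 0 < ∑ i ∈ Finset.range k, (1 + γ * K1 * s i ^ β) ^ α :=
    Finset.sum_pos (fun i hi => hwpos i (by
      rw [Finset.mem_range] at hi; omega) K1 hK1) hne1
  have hA2 : 0 < ∑ i ∈ Finset.range k, (1 + γ * K2 * s i ^ β) ^ α :=
    Finset.sum_pos (fun i hi => hwpos i (by
      rw [Finset.mem_range] at hi; omega) K2 hK2) hne1
  have hB1 : 0 < ∑ j ∈ Finset.Ico k n, (1 + γ * K1 * s j ^ β) ^ α :=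
    Finset.sum_pos (fun j hj => hwpos j (by
      rw [Finset.mem_Ico] at hj; omega) K1 hK1) hne2
  have hB2 : 0 < ∑ j ∈ Finset.Ico k n, (1 + γ * K2 * s j ^ β) ^ α :=
    Finset.sum_pos (fun j hj => hwpos j (by
      rw [Finset.mem_Ico] at hj; omega) K2 hK2) hne2
  simp only [hsplit]
  rw [div_lt_div_iff₀ (by linarith) (by linarith)]
  nlinarith [hsum]
end

section
/- (Proposition 4, Wage Dispersion.) Fix reals γ > 0, β > 0, α ∈ (0,1), an integer n ≥ 2, and strictly increasing manager skills 0 < s_1 < s_2 < ⋯ < s_n ≤ 1. Define wages w_i(K) = (1 + γ·K·s_i^β)^α and the Gini coefficient G(K) = (Σ_{i=1}^n Σ_{j=1}^n |w_i(K) − w_j(K)|) / (2·n·Σ_{i=1}^n w_i(K)) for K ≥ 0. Then G(0) = 0 and G is strictly increasing on [0,∞). -/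
/-- Concavity of `x ^ α`: the increment over a fixed gap `d` is antitone. -/
lemma pow_diff_le {α : ℝ} (hα0 : 0 < α) (hα1 : α ≤ 1) {x y d : ℝ}
    (hx : 0 ≤ x) (hxy : x ≤ y) (hd : 0 ≤ d) :
    (y + d) ^ α - y ^ α ≤ (x + d) ^ α - x ^ α := by
  rcases eq_or_lt_of_le hxy with rfl | hxy
  · exact le_rfl
  rcases eq_or_lt_of_le hd with rfl | hd
  · simp
  have ht : 0 < y - x + d := by linarith
  have hc := Real.concaveOn_rpow hα0.le hα1
  have hyd : (0:ℝ) ≤ y + d := by linarith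
  have hμ0 : 0 ≤ d / (y - x + d) := by positivity
  have hμ1 : d / (y - x + d) ≤ 1 := (div_le_one ht).2 (by linarith)
  have h1 : (d / (y - x + d)) • x ^ α + (1 - d / (y - x + d)) • (y + d) ^ α ≤
      ((d / (y - x + d)) • x + (1 - d / (y - x + d)) • (y + d)) ^ α :=
    hc.2 (Set.mem_Ici.2 hx) (Set.mem_Ici.2 hyd) hμ0 (by linarith) (by ring)
  have h2 : (1 - d / (y - x + d)) • x ^ α + (d / (y - x + d)) • (y + d) ^ α ≤
      ((1 - d / (y - x + d)) • x + (d / (y - x + d)) • (y + d)) ^ α :=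
    hc.2 (Set.mem_Ici.2 hx) (Set.mem_Ici.2 hyd) (by linarith) hμ0 (by ring)
  simp only [smul_eq_mul] at h1 h2
  have e1 : d / (y - x + d) * x + (1 - d / (y - x + d)) * (y + d) = y := by
    field_simp
    ring
  have e2 : (1 - d / (y - x + d)) * x + d / (y - x + d) * (y + d) = x + d := by
    field_simp
    ring
  rw [e1] at h1
  rw [e2] at h2
  linarith

/-- Core pairwise inequality: the wage gap grows proportionally faster than any wage. -/
lemma core0 {α γ K₁ K₂ A B C : ℝ} (hα0 : 0 < α) (hα1 : α < 1) (hγ : 0 < γ)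
    (hK1 : 0 < K₁) (hK12 : K₁ < K₂) (hA : 0 < A) (hAB : A < B) (hC : 0 < C) :
    ((1 + γ * K₁ * B) ^ α - (1 + γ * K₁ * A) ^ α) * (1 + γ * K₂ * C) ^ α
      < ((1 + γ * K₂ * B) ^ α - (1 + γ * K₂ * A) ^ α) * (1 + γ * K₁ * C) ^ α := by
  have hK2 : 0 < K₂ := hK1.trans hK12
  set t := K₂ / K₁ with htdef
  have ht1 : 1 < t := (one_lt_div hK1).2 hK12
  have htK : t * K₁ = K₂ := div_mul_cancel₀ _ hK1.ne'
  have hp : (0:ℝ) < 1 + γ * K₁ * A := by nlinarith [mul_pos (mul_pos hγ hK1) hA]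
  have hq : (0:ℝ) < 1 + γ * K₁ * B := by nlinarith [mul_pos (mul_pos hγ hK1) (hA.trans hAB)]
  have hP : (0:ℝ) < 1 + γ * K₂ * A := by nlinarith [mul_pos (mul_pos hγ hK2) hA]
  have hr : (0:ℝ) < 1 + γ * K₁ * C := by nlinarith [mul_pos (mul_pos hγ hK1) hC]
  have hR : (0:ℝ) < 1 + γ * K₂ * C := by nlinarith [mul_pos (mul_pos hγ hK2) hC]
  have hbase1 : 1 + γ * K₁ * A < 1 + γ * K₁ * B := by
    nlinarith [mul_pos (mul_pos hγ hK1) (sub_pos.2 hAB)]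
  have hgap1 : (1 + γ * K₁ * A) ^ α < (1 + γ * K₁ * B) ^ α :=
    Real.rpow_lt_rpow hp.le hbase1 hα0
  have hRlt : 1 + γ * K₂ * C < t * (1 + γ * K₁ * C) := by
    have e : t * (1 + γ * K₁ * C) = t + γ * (t * K₁) * C := by ring
    rw [e, htK]; linarith
  have hRα : (1 + γ * K₂ * C) ^ α < t ^ α * (1 + γ * K₁ * C) ^ α := by
    rw [← Real.mul_rpow (by linarith : (0:ℝ) ≤ t) hr.le]
    exact Real.rpow_lt_rpow hR.le hRlt hα0
  have e1 : t * (1 + γ * K₁ * B) = t + γ * K₂ * B := by rw [← htK]; ring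
  have e2 : t * (1 + γ * K₁ * A) = t + γ * K₂ * A := by rw [← htK]; ring
  have hmul : ((1 + γ * K₁ * B) ^ α - (1 + γ * K₁ * A) ^ α) * t ^ α
      = (t + γ * K₂ * B) ^ α - (t + γ * K₂ * A) ^ α := by
    rw [← e1, ← e2, Real.mul_rpow (by linarith : (0:ℝ) ≤ t) hq.le,
      Real.mul_rpow (by linarith : (0:ℝ) ≤ t) hp.le]
    ring
  have hconc : (t + γ * K₂ * B) ^ α - (t + γ * K₂ * A) ^ α
      ≤ (1 + γ * K₂ * B) ^ α - (1 + γ * K₂ * A) ^ α := by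
    have h := pow_diff_le hα0 hα1.le (x := 1 + γ * K₂ * A) (y := t + γ * K₂ * A)
      (d := γ * K₂ * (B - A)) hP.le (by linarith) (by nlinarith)
    have e3 : t + γ * K₂ * A + γ * K₂ * (B - A) = t + γ * K₂ * B := by ring
    have e4 : 1 + γ * K₂ * A + γ * K₂ * (B - A) = 1 + γ * K₂ * B := by ring
    rwa [e3, e4] at h
  calc ((1 + γ * K₁ * B) ^ α - (1 + γ * K₁ * A) ^ α) * (1 + γ * K₂ * C) ^ α
      < ((1 + γ * K₁ * B) ^ α - (1 + γ * K₁ * A) ^ α) * (t ^ α * (1 + γ * K₁ * C) ^ α) :=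
        mul_lt_mul_of_pos_left hRα (by linarith)
    _ = (((1 + γ * K₁ * B) ^ α - (1 + γ * K₁ * A) ^ α) * t ^ α) * (1 + γ * K₁ * C) ^ α := by
        ring
    _ = ((t + γ * K₂ * B) ^ α - (t + γ * K₂ * A) ^ α) * (1 + γ * K₁ * C) ^ α := by
        rw [hmul]
    _ ≤ ((1 + γ * K₂ * B) ^ α - (1 + γ * K₂ * A) ^ α) * (1 + γ * K₁ * C) ^ α :=
        mul_le_mul_of_nonneg_right hconc (Real.rpow_nonneg hr.le α)

/-- Proposition 4 (Wage Dispersion): with wages `wᵢ(K) = (1 + γ·K·sᵢ^β)^α`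
for strictly increasing skills `0 < s 0 < ⋯ < s (n−1) ≤ 1`, the Gini
coefficient `G(K) = (Σᵢⱼ |wᵢ(K) − wⱼ(K)|)/(2·n·Σᵢ wᵢ(K))` satisfies
`G(0) = 0` and is strictly increasing on `[0, ∞)`. -/
theorem stmt_11 (γ β α : ℝ) (hγ : 0 < γ) (hβ : 0 < β) (hα0 : 0 < α)
    (hα1 : α < 1) (n : ℕ) (hn : 2 ≤ n) (s : ℕ → ℝ)
    (hs0 : ∀ i < n, 0 < s i) (hs1 : ∀ i < n, s i ≤ 1)
    (hmono : ∀ i j, i < j → j < n → s i < s j) :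
    (fun K : ℝ =>
      (∑ i ∈ Finset.range n, ∑ j ∈ Finset.range n,
          |(1 + γ * K * s i ^ β) ^ α - (1 + γ * K * s j ^ β) ^ α|) /
        (2 * n * ∑ i ∈ Finset.range n, (1 + γ * K * s i ^ β) ^ α)) 0 = 0 ∧
    StrictMonoOn
      (fun K : ℝ =>
        (∑ i ∈ Finset.range n, ∑ j ∈ Finset.range n,
            |(1 + γ * K * s i ^ β) ^ α - (1 + γ * K * s j ^ β) ^ α|) /
          (2 * n * ∑ i ∈ Finset.range n, (1 + γ * K * s i ^ β) ^ α))
      (Set.Ici 0) := by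
  have hn0 : (0:ℝ) < (n:ℝ) := by exact_mod_cast (by omega : 0 < n)
  -- positivity of each wage and of the denominator sum
  have hwpos : ∀ K : ℝ, 0 ≤ K → ∀ i < n, (0:ℝ) < (1 + γ * K * s i ^ β) ^ α := by
    intro K hK i hi
    have h1 : (0:ℝ) ≤ s i ^ β := Real.rpow_nonneg (hs0 i hi).le β
    have h2 : (0:ℝ) ≤ γ * K * s i ^ β := mul_nonneg (mul_nonneg hγ.le hK) h1
    exact Real.rpow_pos_of_pos (by linarith) α
  have hDpos : ∀ K : ℝ, 0 ≤ K →
      (0:ℝ) < ∑ i ∈ Finset.range n, (1 + γ * K * s i ^ β) ^ α := by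
    intro K hK
    refine Finset.sum_pos (fun i hi => hwpos K hK i (Finset.mem_range.1 hi)) ?_
    exact Finset.nonempty_range_iff.2 (by omega)
  -- strict monotonicity of wages in the index, for K > 0
  have hwmono : ∀ K : ℝ, 0 < K → ∀ i j, i < j → j < n →
      (1 + γ * K * s i ^ β) ^ α < (1 + γ * K * s j ^ β) ^ α := by
    intro K hK i j hij hjn
    have hsb : s i ^ β < s j ^ β :=
      Real.rpow_lt_rpow (hs0 i (by omega)).le (hmono i j hij hjn) hβ
    have h1 : (0:ℝ) ≤ s i ^ β := Real.rpow_nonneg (hs0 i (by omega)).le β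
    have h2 : (0:ℝ) ≤ γ * K * s i ^ β := mul_nonneg (mul_nonneg hγ.le hK.le) h1
    refine Real.rpow_lt_rpow (by linarith) ?_ hα0
    have := mul_pos hγ hK
    nlinarith
  have h0 : (∑ i ∈ Finset.range n, ∑ j ∈ Finset.range n,
          |(1 + γ * (0:ℝ) * s i ^ β) ^ α - (1 + γ * 0 * s j ^ β) ^ α|) /
        (2 * n * ∑ i ∈ Finset.range n, (1 + γ * (0:ℝ) * s i ^ β) ^ α) = 0 := by
    simp [Real.one_rpow]
  refine ⟨h0, ?_⟩
  intro K₁ hK₁ K₂ hK₂ hlt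
  dsimp only
  rcases eq_or_lt_of_le (Set.mem_Ici.1 hK₁) with rfl | hK1pos
  · -- K₁ = 0 : G 0 = 0 < G K₂
    rw [h0]
    have hK2 : (0:ℝ) < K₂ := hlt
    refine div_pos ?_ ?_
    · refine Finset.sum_pos' (fun i _ => Finset.sum_nonneg fun j _ => abs_nonneg _) ?_
      refine ⟨0, Finset.mem_range.2 (by omega), ?_⟩
      refine Finset.sum_pos' (fun j _ => abs_nonneg _)
        ⟨n - 1, Finset.mem_range.2 (by omega), ?_⟩
      have hlt' := hwmono K₂ hK2 0 (n - 1) (by omega) (by omega)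
      exact abs_pos.2 (sub_ne_zero.2 (ne_of_lt hlt'))
    · have hD := hDpos K₂ hK2.le
      have h2n : (0:ℝ) < 2 * n := by linarith
      exact mul_pos h2n hD
  · -- 0 < K₁ < K₂
    have hK2 : (0:ℝ) < K₂ := hK1pos.trans hlt
    have hD1 := hDpos K₁ hK1pos.le
    have hD2 := hDpos K₂ hK2.le
    have h2n : (0:ℝ) < 2 * (n:ℝ) := by linarith
    rw [div_lt_div_iff₀ (mul_pos h2n hD1) (mul_pos h2n hD2)]
    -- core per-index-triple inequality
    have hcore : ∀ i j k, i < j → j < n → k < n →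
        ((1 + γ * K₁ * s j ^ β) ^ α - (1 + γ * K₁ * s i ^ β) ^ α) *
          (1 + γ * K₂ * s k ^ β) ^ α
        < ((1 + γ * K₂ * s j ^ β) ^ α - (1 + γ * K₂ * s i ^ β) ^ α) *
          (1 + γ * K₁ * s k ^ β) ^ α := by
      intro i j k hij hjn hkn
      exact core0 hα0 hα1 hγ hK1pos hlt
        (Real.rpow_pos_of_pos (hs0 i (by omega)) β)
        (Real.rpow_lt_rpow (hs0 i (by omega)).le (hmono i j hij hjn) hβ)
        (Real.rpow_pos_of_pos (hs0 k hkn) β)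
    -- gap-vs-denominator inequality
    have hkey2 : ∀ i j, i < j → j < n →
        ((1 + γ * K₁ * s j ^ β) ^ α - (1 + γ * K₁ * s i ^ β) ^ α) *
          (∑ k ∈ Finset.range n, (1 + γ * K₂ * s k ^ β) ^ α)
        < ((1 + γ * K₂ * s j ^ β) ^ α - (1 + γ * K₂ * s i ^ β) ^ α) *
          (∑ k ∈ Finset.range n, (1 + γ * K₁ * s k ^ β) ^ α) := by
      intro i j hij hjn
      rw [Finset.mul_sum, Finset.mul_sum]
      refine Finset.sum_lt_sum_of_nonempty (Finset.nonempty_range_iff.2 (by omega)) ?_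
      intro k hk
      exact hcore i j k hij hjn (Finset.mem_range.1 hk)
    have hterm : ∀ i j, i < n → j < n → i ≠ j →
        |(1 + γ * K₁ * s i ^ β) ^ α - (1 + γ * K₁ * s j ^ β) ^ α| *
          (∑ k ∈ Finset.range n, (1 + γ * K₂ * s k ^ β) ^ α)
        < |(1 + γ * K₂ * s i ^ β) ^ α - (1 + γ * K₂ * s j ^ β) ^ α| *
          (∑ k ∈ Finset.range n, (1 + γ * K₁ * s k ^ β) ^ α) := by
      intro i j hi hj hne
      rcases lt_or_gt_of_ne hne with h | h
      · rw [abs_sub_comm ((1 + γ * K₁ * s i ^ β) ^ α),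
          abs_sub_comm ((1 + γ * K₂ * s i ^ β) ^ α),
          abs_of_nonneg (sub_nonneg.2 (hwmono K₁ hK1pos i j h hj).le),
          abs_of_nonneg (sub_nonneg.2 (hwmono K₂ hK2 i j h hj).le)]
        exact hkey2 i j h hj
      · rw [abs_of_nonneg (sub_nonneg.2 (hwmono K₁ hK1pos j i h hi).le),
          abs_of_nonneg (sub_nonneg.2 (hwmono K₂ hK2 j i h hi).le)]
        exact hkey2 j i h hi
    have hkey : (∑ i ∈ Finset.range n, ∑ j ∈ Finset.range n,
          |(1 + γ * K₁ * s i ^ β) ^ α - (1 + γ * K₁ * s j ^ β) ^ α|) *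
          (∑ i ∈ Finset.range n, (1 + γ * K₂ * s i ^ β) ^ α)
        < (∑ i ∈ Finset.range n, ∑ j ∈ Finset.range n,
          |(1 + γ * K₂ * s i ^ β) ^ α - (1 + γ * K₂ * s j ^ β) ^ α|) *
          (∑ i ∈ Finset.range n, (1 + γ * K₁ * s i ^ β) ^ α) := by
      rw [Finset.sum_mul, Finset.sum_mul]
      refine Finset.sum_lt_sum ?_ ⟨0, Finset.mem_range.2 (by omega), ?_⟩
      · intro i hi
        rw [Finset.sum_mul, Finset.sum_mul]
        refine Finset.sum_le_sum ?_
        intro j hj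
        rcases eq_or_ne i j with rfl | hne
        · simp
        · exact (hterm i j (Finset.mem_range.1 hi) (Finset.mem_range.1 hj) hne).le
      · rw [Finset.sum_mul, Finset.sum_mul]
        refine Finset.sum_lt_sum ?_ ⟨n - 1, Finset.mem_range.2 (by omega), ?_⟩
        · intro j hj
          rcases eq_or_ne 0 j with rfl | hne
          · simp
          · exact (hterm 0 j (by omega) (Finset.mem_range.1 hj) hne).le
        · exact hterm 0 (n - 1) (by omega) (by omega) (by omega)
    calc (∑ i ∈ Finset.range n, ∑ j ∈ Finset.range n,
          |(1 + γ * K₁ * s i ^ β) ^ α - (1 + γ * K₁ * s j ^ β) ^ α|) *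
          (2 * n * ∑ i ∈ Finset.range n, (1 + γ * K₂ * s i ^ β) ^ α)
        = 2 * n * ((∑ i ∈ Finset.range n, ∑ j ∈ Finset.range n,
          |(1 + γ * K₁ * s i ^ β) ^ α - (1 + γ * K₁ * s j ^ β) ^ α|) *
          (∑ i ∈ Finset.range n, (1 + γ * K₂ * s i ^ β) ^ α)) := by ring
      _ < 2 * n * ((∑ i ∈ Finset.range n, ∑ j ∈ Finset.range n,
          |(1 + γ * K₂ * s i ^ β) ^ α - (1 + γ * K₂ * s j ^ β) ^ α|) *
          (∑ i ∈ Finset.range n, (1 + γ * K₁ * s i ^ β) ^ α)) :=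
          mul_lt_mul_of_pos_left hkey (by linarith)
      _ = (∑ i ∈ Finset.range n, ∑ j ∈ Finset.range n,
          |(1 + γ * K₂ * s i ^ β) ^ α - (1 + γ * K₂ * s j ^ β) ^ α|) *
          (2 * n * ∑ i ∈ Finset.range n, (1 + γ * K₁ * s i ^ β) ^ α) := by ring
end
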